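/- Let $K \le k$ be real numbers. Then the function $r \mapsto \dfrac{\sin_K(r)}{\sin_k(r)}$ is monotone nondecreasing on the interval $(0, \pi/\sqrt{k})$ if $k > 0$, and on $(0, \infty)$ if $k \le 0$. -/

import Mathlib

open Real MeasureTheory Set Filter

/-- The generalized sine function `sin_m`. -/
noncomputable def sinm (m r : ℝ) : ℝ :=
  if 0 < m then Real.sin (Real.sqrt m * r) / Real.sqrt m
  else if m = 0 then r
  else Real.sinh (Real.sqrt (-m) * r) / Real.sqrt (-m)

/-- The derivative `sin_m'` of the generalized sine function. -/
noncomputable def sinm' (m r : ℝ) : ℝ :=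
  if 0 < m then Real.cos (Real.sqrt m * r)
  else if m = 0 then 1
  else Real.cosh (Real.sqrt (-m) * r)

/-!
Each `sin_m` solves `y'' = -m y`, `y(0) = 0`, so the Wronskian
`W = sin_K' sin_k - sin_K sin_k'` vanishes at `0` and has derivative `(k - K) sin_K sin_k`.
On the interval where `sin_k > 0` also `sin_K > 0`, hence `W ≥ 0` there, and
`W / sin_k²` is the derivative of `sin_K / sin_k`.
-/

lemma sinm_zero (m : ℝ) : sinm m 0 = 0 := by
  unfold sinm; split_ifs <;> simp

lemma hasDerivAt_sinm (m r : ℝ) : HasDerivAt (sinm m) (sinm' m r) r := by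
  unfold sinm sinm'
  split_ifs with hpos hzero
  · have hs : √m ≠ 0 := (Real.sqrt_pos.2 hpos).ne'
    exact (((hasDerivAt_id' r).const_mul √m).sin.div_const √m).congr_deriv (by field_simp)
  · exact hasDerivAt_id' r
  · have hs : √(-m) ≠ 0 := (Real.sqrt_pos.2 (by grind)).ne'
    exact (((hasDerivAt_id' r).const_mul √(-m)).sinh.div_const √(-m)).congr_deriv
      (by field_simp)

lemma hasDerivAt_sinm' (m r : ℝ) : HasDerivAt (sinm' m) (-m * sinm m r) r := by
  unfold sinm sinm'
  split_ifs with hpos hzero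
  · have hs : √m ≠ 0 := (Real.sqrt_pos.2 hpos).ne'
    exact (((hasDerivAt_id' r).const_mul √m).cos).congr_deriv
      (by field_simp; rw [Real.sq_sqrt hpos.le]; ring)
  · simpa [hzero] using hasDerivAt_const r (1 : ℝ)
  · have hneg : 0 ≤ -m := by grind
    have hs : √(-m) ≠ 0 := (Real.sqrt_pos.2 (by grind)).ne'
    exact (((hasDerivAt_id' r).const_mul √(-m)).cosh).congr_deriv
      (by field_simp; rw [Real.sq_sqrt hneg]; ring)

def sinmDomain (m : ℝ) : Set ℝ :=
  if 0 < m then Ioo 0 (π / √m) else Ioi 0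

lemma isOpen_sinmDomain (m : ℝ) : IsOpen (sinmDomain m) := by
  unfold sinmDomain; split_ifs
  exacts [isOpen_Ioo, isOpen_Ioi]

lemma convex_sinmDomain (m : ℝ) : Convex ℝ (sinmDomain m) := by
  unfold sinmDomain; split_ifs
  exacts [convex_Ioo _ _, convex_Ioi _]

lemma pos_of_mem_sinmDomain {m r : ℝ} (hr : r ∈ sinmDomain m) : 0 < r := by
  unfold sinmDomain at hr
  split_ifs at hr
  exacts [hr.1, hr]

lemma Ioc_subset_sinmDomain {m r : ℝ} (hr : r ∈ sinmDomain m) : Ioc 0 r ⊆ sinmDomain m := by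
  unfold sinmDomain at *
  split_ifs at * with hm
  · exact fun x hx => ⟨hx.1, hx.2.trans_lt hr.2⟩
  · exact fun x hx => hx.1

lemma sinmDomain_anti {K k : ℝ} (hKk : K ≤ k) : sinmDomain k ⊆ sinmDomain K := by
  unfold sinmDomain
  split_ifs with hk hK hK
  · exact Ioo_subset_Ioo_right <| div_le_div_of_nonneg_left pi_pos.le (Real.sqrt_pos.2 hK)
      (Real.sqrt_le_sqrt hKk)
  · exact Ioo_subset_Ioi_self
  · exact absurd (hK.trans_le hKk) hk
  · exact subset_rfl

lemma sinm_pos {m r : ℝ} (hr : r ∈ sinmDomain m) : 0 < sinm m r := by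
  unfold sinmDomain sinm at *
  split_ifs at * with hpos hzero
  · have hs : 0 < √m := Real.sqrt_pos.2 hpos
    refine div_pos (Real.sin_pos_of_pos_of_lt_pi (mul_pos hs hr.1) ?_) hs
    simpa [lt_div_iff₀ hs, mul_comm] using hr.2
  · exact hr
  · have hs : 0 < √(-m) := Real.sqrt_pos.2 (by grind)
    exact div_pos (Real.sinh_pos_iff.2 (mul_pos hs hr)) hs

noncomputable def sinmWronskian (K k r : ℝ) : ℝ :=
  sinm' K r * sinm k r - sinm K r * sinm' k r

lemma sinmWronskian_zero (K k : ℝ) : sinmWronskian K k 0 = 0 := by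
  simp [sinmWronskian, sinm_zero]

lemma hasDerivAt_sinmWronskian (K k r : ℝ) :
    HasDerivAt (sinmWronskian K k) ((k - K) * (sinm K r * sinm k r)) r :=
  (((hasDerivAt_sinm' K r).mul (hasDerivAt_sinm k r)).sub
    ((hasDerivAt_sinm K r).mul (hasDerivAt_sinm' k r))).congr_deriv (by ring)

lemma sinmWronskian_nonneg {K k r : ℝ} (hKk : K ≤ k) (hr : 0 ≤ r)
    (hprod : ∀ x ∈ Ioo 0 r, 0 ≤ sinm K x * sinm k x) : 0 ≤ sinmWronskian K k r := by
  have hmono : MonotoneOn (sinmWronskian K k) (Icc 0 r) := by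
    refine monotoneOn_of_hasDerivWithinAt_nonneg (convex_Icc 0 r)
      (fun x _ => (hasDerivAt_sinmWronskian K k x).continuousAt.continuousWithinAt)
      (fun x _ => (hasDerivAt_sinmWronskian K k x).hasDerivWithinAt) fun x hx => ?_
    rw [interior_Icc] at hx
    exact mul_nonneg (sub_nonneg.2 hKk) (hprod x hx)
  simpa [sinmWronskian_zero] using
    hmono (left_mem_Icc.2 hr) (right_mem_Icc.2 hr) hr

lemma sinmWronskian_nonneg_of_mem_sinmDomain {K k r : ℝ} (hKk : K ≤ k)
    (hr : r ∈ sinmDomain k) : 0 ≤ sinmWronskian K k r :=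
  sinmWronskian_nonneg hKk (pos_of_mem_sinmDomain hr).le fun x hx => by
    have hx' : x ∈ sinmDomain k := Ioc_subset_sinmDomain hr ⟨hx.1, hx.2.le⟩
    exact (mul_pos (sinm_pos (sinmDomain_anti hKk hx')) (sinm_pos hx')).le

lemma hasDerivAt_sinm_div_sinm {K k r : ℝ} (hr : sinm k r ≠ 0) :
    HasDerivAt (fun r => sinm K r / sinm k r) (sinmWronskian K k r / sinm k r ^ 2) r :=
  (hasDerivAt_sinm K r).div (hasDerivAt_sinm k r) hr

/-- For `K ≤ k`, the ratio `sin_K(r)/sin_k(r)` is monotone nondecreasing on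
`(0, π/√k)` when `k > 0` and on `(0, ∞)` when `k ≤ 0`. -/
theorem sinm_ratio_monotone (K k : ℝ) (hKk : K ≤ k) :
    MonotoneOn (fun r => sinm K r / sinm k r)
      (if 0 < k then Set.Ioo 0 (Real.pi / Real.sqrt k) else Set.Ioi 0) := by
  change MonotoneOn _ (sinmDomain k)
  have hderiv : ∀ x ∈ sinmDomain k,
      HasDerivAt (fun r => sinm K r / sinm k r) (sinmWronskian K k x / sinm k x ^ 2) x :=
    fun x hx => hasDerivAt_sinm_div_sinm (sinm_pos hx).ne'
  have hinterior := (isOpen_sinmDomain k).interior_eq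
  refine monotoneOn_of_hasDerivWithinAt_nonneg
    (f' := fun x => sinmWronskian K k x / sinm k x ^ 2) (convex_sinmDomain k)
    (fun x hx => (hderiv x hx).continuousAt.continuousWithinAt)
    (fun x hx => ?_) (fun x hx => ?_) <;> simp only [hinterior] at hx ⊢
  · exact (hderiv x hx).hasDerivWithinAt
  exact div_nonneg (sinmWronskian_nonneg_of_mem_sinmDomain hKk hx) (sq_nonneg _)
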